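/- Let ℏ > 0, m ≥ 1, and a ∈ ℂ^m with ∑ a_i² = 1. Then the linear forms ⟨a,u⟩ and ⟨a,v⟩ anticommute with the partial polar element under the ΨDO product: ⟨a,u⟩ *_{K₀} F_a = − F_a *_{K₀} ⟨a,u⟩ and ⟨a,v⟩ *_{K₀} F_a = − F_a *_{K₀} ⟨a,v⟩, where the products with linear factors are the finite sums ⟨a,u⟩ *_{K₀} F_a = ⟨a,u⟩·F_a, F_a *_{K₀} ⟨a,u⟩ = F_a·⟨a,u⟩ + iℏ ∑_j a_j ∂_{v_j}F_a, ⟨a,v⟩ *_{K₀} F_a = ⟨a,v⟩·F_a + iℏ ∑_j a_j ∂_{u_j}F_a, F_a *_{K₀} ⟨a,v⟩ = F_a·⟨a,v⟩. -/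

import Mathlib

/-- Functions on `ℂ^{2m}`, written as functions of `(u, v)` with `u, v : Fin m → ℂ`. -/
abbrev HolFn (m : ℕ) := (Fin m → ℂ) → (Fin m → ℂ) → ℂ

/-- Partial derivative `∂_{u_j}`. -/
noncomputable def pdU (m : ℕ) (j : Fin m) (f : HolFn m) : HolFn m :=
  fun u v => fderiv ℂ (fun w => f w v) u (Pi.single j 1)

/-- Partial derivative `∂_{v_j}`. -/
noncomputable def pdV (m : ℕ) (j : Fin m) (f : HolFn m) : HolFn m :=
  fun u v => fderiv ℂ (fun w => f u w) v (Pi.single j 1)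

/-- Normal ordered expression of the partial polar element `ε₀₀(a)`:
`F_a(u,v) = i·exp(−(2/(iℏ))·⟨a,u⟩⟨a,v⟩)`. -/
noncomputable def polarElt (ℏ : ℝ) (m : ℕ) (a : Fin m → ℂ) : HolFn m :=
  fun u v => Complex.I *
    Complex.exp (-(2 / (Complex.I * ℏ)) * ((∑ i, a i * u i) * (∑ i, a i * v i)))

/-!
Both partial derivatives of `F_a` are `F_a` times a multiple of `a_j`, so contracting with `a`
and using `∑ a_j² = 1` gives `iℏ ∑_j a_j ∂_{v_j} F_a = iℏ · (−2/(iℏ)) ⟨a,u⟩ F_a = −2 ⟨a,u⟩ F_a`,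
and symmetrically `iℏ ∑_j a_j ∂_{u_j} F_a = −2 ⟨a,v⟩ F_a`. Both identities then read
`x F_a = −(F_a x − 2 x F_a)`.
-/

open Complex

theorem fderiv_const_mul_exp_clm_apply {E : Type*} [NormedAddCommGroup E] [NormedSpace ℂ E]
    (c : ℂ) (L : E →L[ℂ] ℂ) (x y : E) :
    fderiv ℂ (fun w => c * exp (L w)) x y = c * exp (L x) * L y := by
  have h : HasFDerivAt (fun w => c * exp (L w)) (c • exp (L x) • L) x :=
    ((hasDerivAt_exp (L x)).comp_hasFDerivAt x L.hasFDerivAt).const_mul c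
  simp [h.fderiv, mul_assoc]

namespace PolarElt

variable {m : ℕ} (a : Fin m → ℂ)

noncomputable def pairing : (Fin m → ℂ) →L[ℂ] ℂ :=
  ∑ i, a i • ContinuousLinearMap.proj i

theorem pairing_apply (w : Fin m → ℂ) : pairing a w = ∑ i, a i * w i := by
  simp [pairing]

theorem pairing_single (j : Fin m) : pairing a (Pi.single j 1) = a j := by
  simp [pairing_apply, Pi.single_apply]

variable (ℏ : ℝ)

theorem polarElt_comm (u v : Fin m → ℂ) : polarElt ℏ m a u v = polarElt ℏ m a v u := by
  simp only [polarElt, mul_comm (∑ i, a i * u i)]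

theorem pdV_polarElt (j : Fin m) (u v : Fin m → ℂ) :
    pdV m j (polarElt ℏ m a) u v
      = polarElt ℏ m a u v * (-(2 / (I * ℏ)) * (∑ i, a i * u i) * a j) := by
  have hfun : (fun w => polarElt ℏ m a u w)
      = fun w => I * exp (((-(2 / (I * ℏ)) * ∑ i, a i * u i) • pairing a) w) := by
    funext w
    simp only [polarElt, smul_apply, pairing_apply, smul_eq_mul, mul_assoc]
  rw [pdV, hfun, fderiv_const_mul_exp_clm_apply]
  simp only [smul_apply, smul_eq_mul, pairing_single]
  simp only [pairing_apply, polarElt, mul_assoc]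

theorem pdU_polarElt (j : Fin m) (u v : Fin m → ℂ) :
    pdU m j (polarElt ℏ m a) u v
      = polarElt ℏ m a u v * (-(2 / (I * ℏ)) * (∑ i, a i * v i) * a j) := by
  have hswap : pdU m j (polarElt ℏ m a) u v = pdV m j (polarElt ℏ m a) v u := by
    simp only [pdU, pdV, polarElt_comm a ℏ _ v]
  rw [hswap, pdV_polarElt, polarElt_comm]

variable {a}

theorem sum_mul_pdV_polarElt (ha : ∑ i, a i ^ 2 = 1) (u v : Fin m → ℂ) :
    ∑ j, a j * pdV m j (polarElt ℏ m a) u v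
      = polarElt ℏ m a u v * (-(2 / (I * ℏ)) * ∑ i, a i * u i) :=
  calc _ = ∑ j, polarElt ℏ m a u v * (-(2 / (I * ℏ)) * ∑ i, a i * u i) * a j ^ 2 :=
        Finset.sum_congr rfl fun j _ => by rw [pdV_polarElt]; ring
    _ = _ := by rw [← Finset.mul_sum, ha, mul_one]

theorem sum_mul_pdU_polarElt (ha : ∑ i, a i ^ 2 = 1) (u v : Fin m → ℂ) :
    ∑ j, a j * pdU m j (polarElt ℏ m a) u v
      = polarElt ℏ m a u v * (-(2 / (I * ℏ)) * ∑ i, a i * v i) :=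
  calc _ = ∑ j, polarElt ℏ m a u v * (-(2 / (I * ℏ)) * ∑ i, a i * v i) * a j ^ 2 :=
        Finset.sum_congr rfl fun j _ => by rw [pdU_polarElt]; ring
    _ = _ := by rw [← Finset.mul_sum, ha, mul_one]

end PolarElt

open PolarElt in
theorem statement5_general (ℏ : ℝ) (hℏ : 0 < ℏ) (m : ℕ)
    (a : Fin m → ℂ) (ha : ∑ i, a i ^ 2 = 1) :
    ∀ u v : Fin m → ℂ,
      -- ⟨a,u⟩ *_{K₀} F_a = − F_a *_{K₀} ⟨a,u⟩
      ((∑ i, a i * u i) * polarElt ℏ m a u v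
        = -(polarElt ℏ m a u v * (∑ i, a i * u i) +
            (Complex.I * ℏ) * ∑ j, a j * pdV m j (polarElt ℏ m a) u v)) ∧
      -- ⟨a,v⟩ *_{K₀} F_a = − F_a *_{K₀} ⟨a,v⟩
      ((∑ i, a i * v i) * polarElt ℏ m a u v +
          (Complex.I * ℏ) * ∑ j, a j * pdU m j (polarElt ℏ m a) u v
        = -(polarElt ℏ m a u v * (∑ i, a i * v i))) := by
  intro u v
  have hκ : (I * ℏ) * -(2 / (I * ℏ)) = -2 := by
    have : (ℏ : ℂ) ≠ 0 := ofReal_ne_zero.mpr hℏ.ne'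
    field_simp
  rw [sum_mul_pdV_polarElt ℏ ha, sum_mul_pdU_polarElt ℏ ha]
  constructor
  · linear_combination (polarElt ℏ m a u v * ∑ i, a i * u i) * hκ
  · linear_combination (polarElt ℏ m a u v * ∑ i, a i * v i) * hκ

theorem statement5 (ℏ : ℝ) (hℏ : 0 < ℏ) (m : ℕ) (hm : 1 ≤ m)
    (a : Fin m → ℂ) (ha : ∑ i, a i ^ 2 = 1) :
    ∀ u v : Fin m → ℂ,
      -- ⟨a,u⟩ *_{K₀} F_a = − F_a *_{K₀} ⟨a,u⟩
      ((∑ i, a i * u i) * polarElt ℏ m a u v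
        = -(polarElt ℏ m a u v * (∑ i, a i * u i) +
            (Complex.I * ℏ) * ∑ j, a j * pdV m j (polarElt ℏ m a) u v)) ∧
      -- ⟨a,v⟩ *_{K₀} F_a = − F_a *_{K₀} ⟨a,v⟩
      ((∑ i, a i * v i) * polarElt ℏ m a u v +
          (Complex.I * ℏ) * ∑ j, a j * pdU m j (polarElt ℏ m a) u v
        = -(polarElt ℏ m a u v * (∑ i, a i * v i))) :=
  statement5_general ℏ hℏ m a ha
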